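/- Let C > 0, a > 0, b > 0 be real constants and define g(α) = (1−e^{−2α})/(2α) − ((1−e^{−α})/α)² for α > 0. Define G(N) = 2 − C·N²·ln(1 + b·g(a·N)) for N > 0. Then G is continuous on (0,∞), G(N) → 2 as N → 0⁺, and G(N) → −∞ as N → +∞. Consequently there exists N_crit > 0 with G(N_crit) = 0. -/

import Mathlib

/-!
The function `g α` is the variance of `t ↦ e^{-t}` for `t` uniform on `[0, α]`, so `0 ≤ g ≤ 1`;
for large windows it decays only like `1/(2α)`, and `g α ≥ 1/(8α)` once `α ≥ 8`.
Hence `N² ln(1 + b g(aN))` lies between `0` and `bN²`, which gives the limit `2` at `0⁺`,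
and grows at least linearly in `N`, which sends `G` to `-∞`. The intermediate value theorem
on `(0, ∞)` then produces the crossover dimension.
-/

open Filter

/-- The paper's signal-variance function for exponential decay observed over a window of
dimensionless length `α`. -/
noncomputable def g (α : ℝ) : ℝ :=
  (1 - Real.exp (-2 * α)) / (2 * α) - ((1 - Real.exp (-α)) / α) ^ 2

open Real Set Topology

theorem Real.sinh_le_mul_cosh {t : ℝ} (ht : 0 ≤ t) : sinh t ≤ t * cosh t := by
  refine hasSum_le (fun n => ?_) (hasSum_sinh t) ((hasSum_cosh t).mul_left t)
  rw [← mul_div_assoc, ← pow_succ']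
  gcongr
  omega

-- `tanh (α / 2) ≤ α / 2`, cleared of denominators by multiplying with `2 e^{-α/2} cosh (α / 2)`.
theorem two_mul_one_sub_exp_neg_le {α : ℝ} (hα : 0 ≤ α) :
    2 * (1 - exp (-α)) ≤ α * (1 + exp (-α)) := by
  have h := mul_le_mul_of_nonneg_left (sinh_le_mul_cosh (t := α / 2) (by positivity))
    (mul_nonneg zero_le_two (exp_pos (-(α / 2))).le)
  have hinv : exp (α / 2) * exp (-(α / 2)) = 1 := by rw [← exp_add]; simp
  have hsq : exp (-α) = exp (-(α / 2)) ^ 2 := by rw [← exp_nat_mul]; ring_nf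
  rw [sinh_eq, cosh_eq] at h
  nlinarith

theorem g_eq_mul_div {α : ℝ} (hα : α ≠ 0) :
    g α = (1 - exp (-α)) * (α * (1 + exp (-α)) - 2 * (1 - exp (-α))) / (2 * α ^ 2) := by
  have hsq : exp (-2 * α) = exp (-α) ^ 2 := by rw [← exp_nat_mul]; ring_nf
  rw [g, hsq]
  field_simp
  ring

theorem g_nonneg {α : ℝ} (hα : 0 < α) : 0 ≤ g α := by
  rw [g_eq_mul_div hα.ne']
  have h1 : 0 ≤ 1 - exp (-α) := sub_nonneg.2 (exp_le_one_iff.2 (neg_nonpos.2 hα.le))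
  have h2 := two_mul_one_sub_exp_neg_le hα.le
  have : 0 ≤ α * (1 + exp (-α)) - 2 * (1 - exp (-α)) := by linarith
  positivity

theorem g_le_one {α : ℝ} (hα : 0 < α) : g α ≤ 1 := by
  have h : (1 - exp (-2 * α)) / (2 * α) ≤ 1 := by
    rw [div_le_one (by positivity)]
    linarith [add_one_le_exp (-2 * α)]
  exact (sub_le_self _ (sq_nonneg _)).trans h

theorem inv_eight_mul_le_g {α : ℝ} (hα : 8 ≤ α) : (8 * α)⁻¹ ≤ g α := by
  have hα0 : 0 < α := by linarith
  have hexp : exp (-2 * α) ≤ 1 / 2 := by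
    rw [neg_mul, exp_neg, one_div]
    exact inv_anti₀ two_pos (by linarith [add_one_le_exp (2 * α)])
  have hmean : (1 - exp (-α)) / α ≤ α⁻¹ := by
    rw [div_le_iff₀ hα0, inv_mul_cancel₀ hα0.ne']
    linarith [exp_pos (-α)]
  have hmean0 : 0 ≤ (1 - exp (-α)) / α :=
    div_nonneg (sub_nonneg.2 (exp_le_one_iff.2 (by linarith))) hα0.le
  have hsq : ((1 - exp (-α)) / α) ^ 2 ≤ (8 * α)⁻¹ := by
    refine (pow_le_pow_left₀ hmean0 hmean 2).trans ?_
    rw [inv_pow]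
    exact inv_anti₀ (by positivity) (by nlinarith)
  calc (8 * α)⁻¹ = (1 / 2) / (2 * α) - (8 * α)⁻¹ := by field_simp; ring
    _ ≤ (1 - exp (-2 * α)) / (2 * α) - ((1 - exp (-α)) / α) ^ 2 := by gcongr; linarith
    _ = g α := rfl

theorem continuousOn_g : ContinuousOn g {0}ᶜ := by
  unfold g
  fun_prop (disch := intro h; simp_all)

/-- The paper's `N² ln(1 + (x(0)²/σ²) g(λCΔt N))`, with `a = λCΔt` and `b = x(0)²/σ²`. -/
noncomputable def fitGain (a b N : ℝ) : ℝ :=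
  N ^ 2 * log (1 + b * g (a * N))

section fitGain

variable {a b : ℝ}

theorem one_le_one_add_mul_g (hb : 0 ≤ b) {α : ℝ} (hα : 0 < α) : 1 ≤ 1 + b * g α :=
  le_add_of_nonneg_right (mul_nonneg hb (g_nonneg hα))

theorem continuousOn_fitGain (ha : 0 < a) (hb : 0 ≤ b) : ContinuousOn (fitGain a b) (Ioi 0) := by
  have hgN : ContinuousOn (fun N => g (a * N)) (Ioi 0) :=
    continuousOn_g.comp (by fun_prop) fun N hN => mul_ne_zero ha.ne' (ne_of_gt hN)
  refine (continuousOn_pow 2).mul ((continuousOn_const.add (continuousOn_const.mul hgN)).log ?_)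
  exact fun N hN => (zero_lt_one.trans_le (one_le_one_add_mul_g hb (mul_pos ha hN))).ne'

theorem fitGain_nonneg (ha : 0 < a) (hb : 0 ≤ b) {N : ℝ} (hN : 0 < N) : 0 ≤ fitGain a b N :=
  mul_nonneg (sq_nonneg N) (log_nonneg (one_le_one_add_mul_g hb (mul_pos ha hN)))

theorem fitGain_le (ha : 0 < a) (hb : 0 ≤ b) {N : ℝ} (hN : 0 < N) : fitGain a b N ≤ N ^ 2 * b := by
  have hpos := zero_lt_one.trans_le (one_le_one_add_mul_g hb (mul_pos ha hN))
  have hlog : log (1 + b * g (a * N)) ≤ b :=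
    calc log (1 + b * g (a * N)) ≤ b * g (a * N) := by linarith [log_le_sub_one_of_pos hpos]
      _ ≤ b := mul_le_of_le_one_right hb (g_le_one (mul_pos ha hN))
  exact mul_le_mul_of_nonneg_left hlog (sq_nonneg N)

theorem tendsto_fitGain_nhdsGT_zero (ha : 0 < a) (hb : 0 ≤ b) :
    Tendsto (fitGain a b) (𝓝[>] 0) (𝓝 0) := by
  have hlim : Tendsto (fun N : ℝ => N ^ 2 * b) (𝓝[>] 0) (𝓝 0) :=
    ((by fun_prop : Continuous fun N : ℝ => N ^ 2 * b).tendsto' 0 0 (by simp)).mono_left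
      nhdsWithin_le_nhds
  refine tendsto_of_tendsto_of_tendsto_of_le_of_le' tendsto_const_nhds hlim ?_ ?_ <;>
    filter_upwards [self_mem_nhdsWithin] with N hN
  exacts [fitGain_nonneg ha hb hN, fitGain_le ha hb hN]

theorem mul_le_fitGain (ha : 0 < a) (hb : 0 ≤ b) {N : ℝ} (hN : 8 ≤ a * N) :
    b / (8 * a * (1 + b)) * N ≤ fitGain a b N := by
  have hα : 0 < a * N := by linarith
  have hx0 : 0 ≤ b * g (a * N) := mul_nonneg hb (g_nonneg hα)
  have hxb : b * g (a * N) ≤ b := mul_le_of_le_one_right hb (g_le_one hα)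
  have hlog : b * g (a * N) / (1 + b) ≤ log (1 + b * g (a * N)) :=
    calc b * g (a * N) / (1 + b) ≤ b * g (a * N) / (1 + b * g (a * N)) := by gcongr
      _ = 1 - (1 + b * g (a * N))⁻¹ := by field_simp; ring
      _ ≤ log (1 + b * g (a * N)) := one_sub_inv_le_log_of_pos (by linarith)
  calc b / (8 * a * (1 + b)) * N = N ^ 2 * (b * (8 * (a * N))⁻¹ / (1 + b)) := by
        field_simp
    _ ≤ N ^ 2 * (b * g (a * N) / (1 + b)) := by gcongr; exact inv_eight_mul_le_g hN
    _ ≤ fitGain a b N := mul_le_mul_of_nonneg_left hlog (sq_nonneg N)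

theorem tendsto_fitGain_atTop (ha : 0 < a) (hb : 0 < b) : Tendsto (fitGain a b) atTop atTop := by
  have hslope : 0 < b / (8 * a * (1 + b)) := by positivity
  refine tendsto_atTop_mono' atTop ?_ (tendsto_id.const_mul_atTop hslope)
  filter_upwards [eventually_ge_atTop (8 / a)] with N hN
  exact mul_le_fitGain ha hb.le ((div_le_iff₀' ha).1 hN)

end fitGain

/-- Combinatorial-effects scenario (Case 3, `M/N = C`):
`G(N) = 2 − C·N²·ln(1 + b·g(a·N))` is continuous on `(0,∞)`, tends to `2` as `N → 0⁺`,
tends to `−∞` as `N → +∞`, and consequently has a positive zero `N_crit`. -/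
theorem combinatorial_effects_crossover (C a b : ℝ) (hC : 0 < C) (ha : 0 < a) (hb : 0 < b)
    (G : ℝ → ℝ) (hG : ∀ N : ℝ, G N = 2 - C * N ^ 2 * Real.log (1 + b * g (a * N))) :
    ContinuousOn G (Set.Ioi (0 : ℝ)) ∧
    Tendsto G (nhdsWithin 0 (Set.Ioi 0)) (nhds 2) ∧
    Tendsto G atTop atBot ∧
    ∃ Ncrit : ℝ, 0 < Ncrit ∧ G Ncrit = 0 := by
  have hG' : G = fun N => 2 - C * fitGain a b N :=
    funext fun N => by rw [hG, fitGain, mul_assoc]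
  have hcont : ContinuousOn G (Ioi 0) :=
    hG' ▸ continuousOn_const.sub (continuousOn_const.mul (continuousOn_fitGain ha hb.le))
  have hzero : Tendsto G (𝓝[>] 0) (𝓝 2) := by
    simpa [hG'] using tendsto_const_nhds.sub ((tendsto_fitGain_nhdsGT_zero ha hb.le).const_mul C)
  have htop : Tendsto G atTop atBot := by
    simpa only [hG', sub_eq_add_neg, Function.comp_def] using tendsto_atBot_add_const_left _ 2
      (tendsto_neg_atTop_atBot.comp ((tendsto_fitGain_atTop ha hb).const_mul_atTop hC))
  obtain ⟨N, hN, hGN⟩ := isPreconnected_Ioi.intermediate_value_Iio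
    (le_principal_iff.2 (Ioi_mem_atTop 0)) (le_principal_iff.2 self_mem_nhdsWithin)
    hcont htop hzero (two_pos : (0 : ℝ) < 2)
  exact ⟨hcont, hzero, htop, N, hN, hGN⟩
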